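/- arXiv:0807.4731 — 6 statements merged into one kernel-verified Lean document; each statement's English description precedes it below -/
import Mathlib

section
/- Fix t > 0. Let γ : [0, t] → ℝ be continuous and let (x, y, θ) : [0, t] → ℝ³ solve x' = sin(γ/2) cos θ, y' = sin(γ/2) sin θ, θ' = −cos(γ/2), with x(0) = y(0) = θ(0) = 0. Define γ¹(s) = γ(t−s) and let (x¹, y¹, θ¹) solve the same system with γ replaced by γ¹ and zero initial conditions. Then for all s ∈ [0, t]: θ¹(s) = θ(t) − θ(t−s), x¹(s) = cos θ(t)·(x(t) − x(t−s)) + sin θ(t)·(y(t) − y(t−s)), and y¹(s) = sin θ(t)·(x(t) − x(t−s)) − cos θ(t)·(y(t) − y(t−s)). -/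
open Real Set

/-
Reversing time turns the derivative of the increment `θ t - θ (t - s)` into `θ' (t - s)`, which is
exactly `θ1'`; so `θ1` is the reversed increment of `θ`. With that, `(x1', y1')` is the velocity
`(x', y')` at time `t - s`, rotated by `-θ t` and reflected in the horizontal axis, so `x1` and `y1`
are the reversed increments of the corresponding fixed linear combinations of `x` and `y`.
-/

theorem hasDerivAt_sub_comp_const_sub {E : Type*} [NormedAddCommGroup E] [NormedSpace ℝ E]
    {f : ℝ → E} {f' : E} (t s : ℝ) (hf : HasDerivAt f f' (t - s)) :
    HasDerivAt (fun u => f t - f (t - u)) f' s := by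
  simpa using (hf.comp_const_sub t s).const_sub (f t)

theorem eq_sub_comp_const_sub_of_hasDerivAt {E : Type*} [NormedAddCommGroup E]
    [NormedSpace ℝ E] {f g f' : ℝ → E} {t : ℝ}
    (hf : ∀ s ∈ Icc 0 t, HasDerivAt f (f' s) s)
    (hg : ∀ s ∈ Icc 0 t, HasDerivAt g (f' (t - s)) s) (hg0 : g 0 = 0) :
    ∀ s ∈ Icc 0 t, g s = f t - f (t - s) := by
  have hmem : ∀ s ∈ Icc 0 t, t - s ∈ Icc 0 t := fun s hs =>
    ⟨by linarith [hs.2], by linarith [hs.1]⟩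
  have hinc : ∀ s ∈ Icc 0 t, HasDerivAt (fun u => f t - f (t - u)) (f' (t - s)) s :=
    fun s hs => hasDerivAt_sub_comp_const_sub t s (hf (t - s) (hmem s hs))
  refine eq_of_has_deriv_right_eq
    (fun s hs => (hg s (Ico_subset_Icc_self hs)).hasDerivWithinAt)
    (fun s hs => (hinc s (Ico_subset_Icc_self hs)).hasDerivWithinAt)
    (fun s hs => (hg s hs).continuousAt.continuousWithinAt)
    (fun s hs => (hinc s hs).continuousAt.continuousWithinAt) ?_
  simp [hg0]

theorem reflection_eps1_horizontal_general (t : ℝ)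
    (γ x y θ x1 y1 θ1 : ℝ → ℝ)
    (hx : ∀ s ∈ Icc 0 t, HasDerivAt x (Real.sin (γ s / 2) * Real.cos (θ s)) s)
    (hy : ∀ s ∈ Icc 0 t, HasDerivAt y (Real.sin (γ s / 2) * Real.sin (θ s)) s)
    (hθ : ∀ s ∈ Icc 0 t, HasDerivAt θ (-Real.cos (γ s / 2)) s)
    (hx1 : ∀ s ∈ Icc 0 t, HasDerivAt x1 (Real.sin (γ (t - s) / 2) * Real.cos (θ1 s)) s)
    (hy1 : ∀ s ∈ Icc 0 t, HasDerivAt y1 (Real.sin (γ (t - s) / 2) * Real.sin (θ1 s)) s)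
    (hθ1 : ∀ s ∈ Icc 0 t, HasDerivAt θ1 (-Real.cos (γ (t - s) / 2)) s)
    (hx10 : x1 0 = 0) (hy10 : y1 0 = 0) (hθ10 : θ1 0 = 0) :
    ∀ s ∈ Icc 0 t,
      θ1 s = θ t - θ (t - s) ∧
      x1 s = Real.cos (θ t) * (x t - x (t - s)) + Real.sin (θ t) * (y t - y (t - s)) ∧
      y1 s = Real.sin (θ t) * (x t - x (t - s)) - Real.cos (θ t) * (y t - y (t - s)) := by
  have hθ1_eq := eq_sub_comp_const_sub_of_hasDerivAt hθ hθ1 hθ10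
  have hx1_eq := eq_sub_comp_const_sub_of_hasDerivAt
    (f := fun u => Real.cos (θ t) * x u + Real.sin (θ t) * y u)
    (fun s hs => ((hx s hs).const_mul _).add ((hy s hs).const_mul _))
    (fun s hs => (hx1 s hs).congr_deriv (by rw [hθ1_eq s hs, Real.cos_sub]; ring)) hx10
  have hy1_eq := eq_sub_comp_const_sub_of_hasDerivAt
    (f := fun u => Real.sin (θ t) * x u - Real.cos (θ t) * y u)
    (fun s hs => ((hx s hs).const_mul _).sub ((hy s hs).const_mul _))
    (fun s hs => (hy1 s hs).congr_deriv (by rw [hθ1_eq s hs, Real.sin_sub]; ring)) hy10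
  intro s hs
  exact ⟨hθ1_eq s hs, by rw [hx1_eq s hs]; ring, by rw [hy1_eq s hs]; ring⟩

theorem reflection_eps1_horizontal (t : ℝ) (ht : 0 < t)
    (γ x y θ x1 y1 θ1 : ℝ → ℝ)
    (hγcont : Continuous γ)
    (hx : ∀ s ∈ Icc 0 t, HasDerivAt x (Real.sin (γ s / 2) * Real.cos (θ s)) s)
    (hy : ∀ s ∈ Icc 0 t, HasDerivAt y (Real.sin (γ s / 2) * Real.sin (θ s)) s)
    (hθ : ∀ s ∈ Icc 0 t, HasDerivAt θ (-Real.cos (γ s / 2)) s)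
    (hx0 : x 0 = 0) (hy0 : y 0 = 0) (hθ0 : θ 0 = 0)
    (hx1 : ∀ s ∈ Icc 0 t, HasDerivAt x1 (Real.sin (γ (t - s) / 2) * Real.cos (θ1 s)) s)
    (hy1 : ∀ s ∈ Icc 0 t, HasDerivAt y1 (Real.sin (γ (t - s) / 2) * Real.sin (θ1 s)) s)
    (hθ1 : ∀ s ∈ Icc 0 t, HasDerivAt θ1 (-Real.cos (γ (t - s) / 2)) s)
    (hx10 : x1 0 = 0) (hy10 : y1 0 = 0) (hθ10 : θ1 0 = 0) :
    ∀ s ∈ Icc 0 t,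
      θ1 s = θ t - θ (t - s) ∧
      x1 s = Real.cos (θ t) * (x t - x (t - s)) + Real.sin (θ t) * (y t - y (t - s)) ∧
      y1 s = Real.sin (θ t) * (x t - x (t - s)) - Real.cos (θ t) * (y t - y (t - s)) :=
  reflection_eps1_horizontal_general t γ x y θ x1 y1 θ1 hx hy hθ hx1 hy1 hθ1 hx10 hy10 hθ10
end

section
/- Let x, y, θ ∈ ℝ. Then the pair of equations −x cos θ − y sin θ = x and −x sin θ + y cos θ = y holds if and only if x cos(θ/2) + y sin(θ/2) = 0. -/
/-! With `u = (cos (θ/2), sin (θ/2))`, the double-angle formulas show that `ε²` acts on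
`v = (x, y)` as the reflection `v ↦ v - 2 ⟪u, v⟫ u` in the line orthogonal to `u`.
Since `u` is a unit vector, `v` is fixed exactly when `⟪u, v⟫ = x cos (θ/2) + y sin (θ/2)`
vanishes. -/

open Real

lemma sub_reflection_fst (x y φ : ℝ) :
    x - (-x * cos (2 * φ) - y * sin (2 * φ)) = 2 * ((x * cos φ + y * sin φ) * cos φ) := by
  rw [cos_two_mul, sin_two_mul]
  ring

lemma sub_reflection_snd (x y φ : ℝ) :
    y - (-x * sin (2 * φ) + y * cos (2 * φ)) = 2 * ((x * cos φ + y * sin φ) * sin φ) := by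
  rw [cos_two_mul', sin_two_mul]
  linear_combination (-y) * sin_sq_add_cos_sq φ

lemma mul_cos_eq_zero_and_mul_sin_eq_zero_iff (r φ : ℝ) :
    r * cos φ = 0 ∧ r * sin φ = 0 ↔ r = 0 := by
  refine ⟨fun ⟨hc, hs⟩ => ?_, fun hr => by simp [hr]⟩
  have hsq : r ^ 2 = (r * sin φ) ^ 2 + (r * cos φ) ^ 2 := by
    linear_combination (-r ^ 2) * sin_sq_add_cos_sq φ
  rw [hc, hs] at hsq
  exact pow_eq_zero_iff two_ne_zero |>.mp (by simpa using hsq)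

theorem eps2_fixed_points (x y θ : ℝ) :
    (-x * Real.cos θ - y * Real.sin θ = x ∧ -x * Real.sin θ + y * Real.cos θ = y) ↔
      x * Real.cos (θ / 2) + y * Real.sin (θ / 2) = 0 := by
  obtain ⟨φ, rfl⟩ : ∃ φ, θ = 2 * φ := ⟨θ / 2, by ring⟩
  rw [mul_div_cancel_left₀ φ two_ne_zero, eq_comm, ← sub_eq_zero, sub_reflection_fst,
    eq_comm (b := y), ← sub_eq_zero (a := y), sub_reflection_snd]
  simp only [mul_eq_zero (a := (2 : ℝ)), two_ne_zero, false_or]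
  exact mul_cos_eq_zero_and_mul_sin_eq_zero_iff _ φ
end

section
/- Let x, y ∈ ℝ and θ ∈ ℝ/2πℤ. The reflection ε⁵ : (x, y, θ) ↦ (−x cos θ − y sin θ, x sin θ − y cos θ, −θ) fixes (x, y, θ) if and only if θ = π (mod 2π) or (x, y, θ) = (0, 0, 0). -/
open Real

/-
`-θ = θ` forces `θ ∈ {0, π}`. At `θ = π` the map is `(x, y) ↦ (x, y)` and every point is fixed,
while at `θ = 0` it is `(x, y) ↦ (-x, -y)`, whose only fixed point is the origin.
-/
theorem eps5_fixed_points (x y : ℝ) (θ : Real.Angle) :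
    (-x * θ.cos - y * θ.sin = x ∧ x * θ.sin - y * θ.cos = y ∧ -θ = θ) ↔
      (θ = (Real.pi : Real.Angle) ∨ (x = 0 ∧ y = 0 ∧ θ = 0)) := by
  constructor
  · rintro ⟨hx, hy, hθ⟩
    rcases Real.Angle.neg_eq_self_iff.mp hθ with rfl | rfl
    · simp only [Real.Angle.cos_zero, Real.Angle.sin_zero, mul_one, mul_zero, sub_zero,
        zero_sub] at hx hy
      exact Or.inr ⟨by linarith, by linarith, rfl⟩
    · exact Or.inl rfl
  · rintro (rfl | ⟨rfl, rfl, rfl⟩)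
    · simp [Real.Angle.cos_coe, Real.Angle.sin_coe, Real.Angle.neg_coe_pi]
    · simp
end

section
/- Let k ∈ (0, 1) and let sn, cn, dn : ℝ → ℝ satisfy sn' = cn·dn, cn' = −sn·dn, dn' = −k²·sn·cn with sn(0) = 0, cn(0) = 1, dn(0) = 1, and let E(p) = ∫₀ᵖ dn(t)² dt. Define f₁(p) = cn(p)(E(p) − p) − dn(p) sn(p). Then at every point p where cn(p) ≠ 0, the function g₁ = f₁/cn is differentiable with g₁'(p) = −dn(p)²/cn(p)². In particular g₁ is strictly decreasing on every interval where cn does not vanish. -/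
open Real intervalIntegral Set

/-!
Along the flow, `sn² + cn²` and `k² sn² + dn²` are first integrals, both equal to `1` by the
initial conditions. With them the quotient rule collapses the numerator of `g₁'` to `-dn²`
(the terms containing `E(p) - p` cancel), and `dn² ≥ 1 - k² > 0`.
-/

theorem sq_add_sq_eq_one_of_hasDerivAt {s c d : ℝ → ℝ}
    (hs : ∀ t, HasDerivAt s (c t * d t) t) (hc : ∀ t, HasDerivAt c (-(s t * d t)) t)
    (hs0 : s 0 = 0) (hc0 : c 0 = 1) (t : ℝ) : s t ^ 2 + c t ^ 2 = 1 := by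
  have hderiv : ∀ x, HasDerivAt (fun x => s x ^ 2 + c x ^ 2) 0 x := fun x =>
    (((hs x).pow 2).add ((hc x).pow 2)).congr_deriv (by ring)
  simpa [hs0, hc0] using is_const_of_deriv_eq_zero (fun x => (hderiv x).differentiableAt)
    (fun x => (hderiv x).deriv) t 0

theorem mul_sq_add_sq_eq_one_of_hasDerivAt {k : ℝ} {s c d : ℝ → ℝ}
    (hs : ∀ t, HasDerivAt s (c t * d t) t) (hd : ∀ t, HasDerivAt d (-(k ^ 2 * s t * c t)) t)
    (hs0 : s 0 = 0) (hd0 : d 0 = 1) (t : ℝ) : k ^ 2 * s t ^ 2 + d t ^ 2 = 1 := by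
  have hderiv : ∀ x, HasDerivAt (fun x => k ^ 2 * s x ^ 2 + d x ^ 2) 0 x := fun x =>
    ((((hs x).pow 2).const_mul (k ^ 2)).add ((hd x).pow 2)).congr_deriv (by ring)
  simpa [hs0, hd0] using is_const_of_deriv_eq_zero (fun x => (hderiv x).differentiableAt)
    (fun x => (hderiv x).deriv) t 0

theorem sq_pos_of_mul_sq_add_sq_eq_one {k s c d : ℝ} (hk : k ^ 2 < 1)
    (hsc : s ^ 2 + c ^ 2 = 1) (hsd : k ^ 2 * s ^ 2 + d ^ 2 = 1) : 0 < d ^ 2 := by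
  nlinarith [sq_nonneg c, sq_nonneg k]

theorem hasDerivAt_g1 {k p : ℝ} {sn cn dn : ℝ → ℝ} (hdn_cont : Continuous dn)
    (hsn : HasDerivAt sn (cn p * dn p) p) (hcn : HasDerivAt cn (-(sn p * dn p)) p)
    (hdn : HasDerivAt dn (-(k ^ 2 * sn p * cn p)) p)
    (hsc : sn p ^ 2 + cn p ^ 2 = 1) (hsd : k ^ 2 * sn p ^ 2 + dn p ^ 2 = 1) (hp : cn p ≠ 0) :
    HasDerivAt
      (fun p => (cn p * ((∫ t in (0:ℝ)..p, (dn t) ^ 2) - p) - dn p * sn p) / cn p)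
      (-(dn p) ^ 2 / (cn p) ^ 2) p := by
  have hE : HasDerivAt (fun p => ∫ t in (0:ℝ)..p, dn t ^ 2) (dn p ^ 2) p :=
    ((hdn_cont.pow 2).integral_hasStrictDerivAt 0 p).hasDerivAt
  have hnum := (hcn.fun_mul (hE.fun_sub (hasDerivAt_id' p))).fun_sub (hdn.fun_mul hsn)
  refine (hnum.fun_div hcn hp).congr_deriv ?_
  congr 1
  linear_combination cn p ^ 2 * hsd - dn p ^ 2 * hsc

theorem strictAntiOn_Icc_of_hasDerivAt_neg {f f' : ℝ → ℝ} {a b : ℝ}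
    (hf : ∀ x ∈ Icc a b, HasDerivAt f (f' x) x) (hf' : ∀ x ∈ Icc a b, f' x < 0) :
    StrictAntiOn f (Icc a b) :=
  strictAntiOn_of_hasDerivWithinAt_neg (convex_Icc a b)
    (fun x hx => (hf x hx).continuousAt.continuousWithinAt)
    (fun x hx => (hf x (interior_subset hx)).hasDerivWithinAt)
    (fun x hx => hf' x (interior_subset hx))

theorem g1_decreasing (k : ℝ) (hk : k ∈ Set.Ioo (0 : ℝ) 1) (sn cn dn : ℝ → ℝ)
    (hsn : ∀ t, HasDerivAt sn (cn t * dn t) t)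
    (hcn : ∀ t, HasDerivAt cn (-(sn t * dn t)) t)
    (hdn : ∀ t, HasDerivAt dn (-(k ^ 2 * sn t * cn t)) t)
    (hsn0 : sn 0 = 0) (hcn0 : cn 0 = 1) (hdn0 : dn 0 = 1) :
    (∀ p : ℝ, cn p ≠ 0 →
      HasDerivAt
        (fun p => (cn p * ((∫ t in (0:ℝ)..p, (dn t) ^ 2) - p) - dn p * sn p) / cn p)
        (-(dn p) ^ 2 / (cn p) ^ 2) p) ∧
    (∀ a b : ℝ, (∀ p ∈ Icc a b, cn p ≠ 0) →
      StrictAntiOn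
        (fun p => (cn p * ((∫ t in (0:ℝ)..p, (dn t) ^ 2) - p) - dn p * sn p) / cn p)
        (Icc a b)) := by
  have hsc := sq_add_sq_eq_one_of_hasDerivAt hsn hcn hsn0 hcn0
  have hsd := mul_sq_add_sq_eq_one_of_hasDerivAt hsn hdn hsn0 hdn0
  have hdn_cont : Continuous dn := continuous_iff_continuousAt.2 fun t => (hdn t).continuousAt
  have hderiv p (hp : cn p ≠ 0) :=
    hasDerivAt_g1 hdn_cont (hsn p) (hcn p) (hdn p) (hsc p) (hsd p) hp
  refine ⟨hderiv, fun a b hab => strictAntiOn_Icc_of_hasDerivAt_neg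
    (fun p hp => hderiv p (hab p hp)) fun p hp => ?_⟩
  have hk2 : k ^ 2 < 1 := pow_lt_one₀ hk.1.le hk.2 two_ne_zero
  have hdn_sq := sq_pos_of_mul_sq_add_sq_eq_one hk2 (hsc p) (hsd p)
  have hcn_ne := hab p hp
  have hcn_sq : 0 < cn p ^ 2 := by positivity
  exact div_neg_of_neg_of_pos (neg_neg_of_pos hdn_sq) hcn_sq
end

section
/- Let k ∈ (0, 1), let sn, cn, dn be the Jacobi elliptic functions of modulus k (solutions of sn' = cn·dn, cn' = −sn·dn, dn' = −k² sn·cn with sn(0)=0, cn(0)=dn(0)=1), let K be the smallest positive zero of cn, and let E(p) = ∫₀ᵖ dn². Define f₁(p) = cn(p)(E(p) − p) − dn(p) sn(p). Then f₁(p) < 0 for all p ∈ (0, K], and f₁ has at least one zero in the open interval (K, 2K). -/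
open Real intervalIntegral Set

/-!
On `(0, K]` we have `cn ≥ 0`, `E(p) ≤ p` (as `dn² ≤ 1`) and `dn sn > 0`, so `f₁ < 0`.
The substitution `t ↦ 2K - t`, `(sn, cn, dn) ↦ (sn, -cn, dn)` maps solutions of the Jacobi
system to solutions and, since `cn K = 0`, fixes the state at time `K`; the system is Lipschitz
on the unit ball, where the solution stays, so uniqueness gives `sn 2K = 0`, `cn 2K = -1`,
`dn 2K = 1`. Hence `f₁(2K) = 2K - E(2K) > 0`, because `dn K² = 1 - k² < 1`, and the
intermediate value theorem gives a zero in `(K, 2K)`.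
-/

/-- The vector field of the Jacobi system `sn' = cn dn, cn' = -sn dn, dn' = -k² sn cn`. -/
def jacobiField (k : ℝ) (x : ℝ × ℝ × ℝ) : ℝ × ℝ × ℝ :=
  (x.2.1 * x.2.2, -(x.1 * x.2.2), -(k ^ 2 * x.1 * x.2.1))

theorem abs_mul_sub_mul_le {a b c d : ℝ} (ha : |a| ≤ 1) (hd : |d| ≤ 1) :
    |a * b - c * d| ≤ |a - c| + |b - d| :=
  calc |a * b - c * d| = |a * (b - d) + d * (a - c)| := by ring_nf
    _ ≤ |a| * |b - d| + |d| * |a - c| := by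
      rw [← abs_mul, ← abs_mul]; exact abs_add_le _ _
    _ ≤ 1 * |b - d| + 1 * |a - c| := by gcongr
    _ = |a - c| + |b - d| := by ring

theorem jacobiField_lipschitzOnWith {k : ℝ} (hk : k ^ 2 ≤ 1) :
    LipschitzOnWith 2 (jacobiField k) (Metric.closedBall 0 1) := by
  refine LipschitzOnWith.of_dist_le_mul fun x hx y hy => ?_
  rw [mem_closedBall_zero_iff] at hx hy
  have hx₁ : |x.1| ≤ 1 := (norm_fst_le x).trans hx
  have hx₂ : |x.2.1| ≤ 1 := ((norm_fst_le x.2).trans (norm_snd_le x)).trans hx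
  have hy₂ : |y.2.1| ≤ 1 := ((norm_fst_le y.2).trans (norm_snd_le y)).trans hy
  have hy₃ : |y.2.2| ≤ 1 := ((norm_snd_le y.2).trans (norm_snd_le y)).trans hy
  simp only [Prod.dist_eq, Real.dist_eq, jacobiField, NNReal.coe_ofNat]
  set M := max |x.1 - y.1| (max |x.2.1 - y.2.1| |x.2.2 - y.2.2|)
  have h₁ : |x.1 - y.1| ≤ M := le_max_left _ _
  have h₂ : |x.2.1 - y.2.1| ≤ M := (le_max_left _ _).trans (le_max_right _ _)
  have h₃ : |x.2.2 - y.2.2| ≤ M := (le_max_right _ _).trans (le_max_right _ _)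
  refine max_le ?_ (max_le ?_ ?_)
  · linarith [abs_mul_sub_mul_le hx₂ hy₃ (b := x.2.2) (c := y.2.1)]
  · rw [neg_sub_neg, abs_sub_comm]
    linarith [abs_mul_sub_mul_le hx₁ hy₃ (b := x.2.2) (c := y.1)]
  · have : |-(k ^ 2 * x.1 * x.2.1) - -(k ^ 2 * y.1 * y.2.1)| ≤ |x.1 * x.2.1 - y.1 * y.2.1| := by
      rw [neg_sub_neg, mul_assoc, mul_assoc, ← mul_sub, abs_mul, abs_of_nonneg (sq_nonneg k),
        abs_sub_comm]
      exact mul_le_of_le_one_left (abs_nonneg _) hk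
    linarith [abs_mul_sub_mul_le hx₁ hy₂ (b := x.2.1) (c := y.1)]

structure IsJacobiTriple (k : ℝ) (sn cn dn : ℝ → ℝ) : Prop where
  hasDerivAt_sn : ∀ t, HasDerivAt sn (cn t * dn t) t
  hasDerivAt_cn : ∀ t, HasDerivAt cn (-(sn t * dn t)) t
  hasDerivAt_dn : ∀ t, HasDerivAt dn (-(k ^ 2 * sn t * cn t)) t
  sn_zero : sn 0 = 0
  cn_zero : cn 0 = 1
  dn_zero : dn 0 = 1

theorem pos_of_mem_Ico_of_isLeast_zero {f : ℝ → ℝ} {K p : ℝ} (hf : Continuous f)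
    (hf0 : 0 < f 0) (hK : IsLeast {p : ℝ | 0 < p ∧ f p = 0} K) (hp : p ∈ Ico 0 K) :
    0 < f p := by
  by_contra! hfp
  obtain ⟨c, hc, hfc⟩ := intermediate_value_Icc' hp.1 hf.continuousOn ⟨hfp, hf0.le⟩
  have hc0 : 0 < c := hc.1.lt_of_ne (by rintro rfl; exact hf0.ne' hfc)
  exact (hK.2 ⟨hc0, hfc⟩).not_gt (hc.2.trans_lt hp.2)

theorem integral_lt_sub_of_le_one {g : ℝ → ℝ} {a b c : ℝ} (hab : a < b)
    (hg : ContinuousOn g (Icc a b)) (hle : ∀ x ∈ Icc a b, g x ≤ 1) (hc : c ∈ Icc a b)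
    (hgc : g c < 1) : ∫ x in a..b, g x < b - a := by
  have := integral_lt_integral_of_continuousOn_of_le_of_exists_lt hab hg continuousOn_const
    (fun x hx => hle x (Ioc_subset_Icc_self hx)) ⟨c, hc, hgc⟩
  simpa using this

namespace IsJacobiTriple

variable {k K : ℝ} {sn cn dn : ℝ → ℝ}

theorem continuous_sn (h : IsJacobiTriple k sn cn dn) : Continuous sn :=
  continuous_iff_continuousAt.2 fun t => (h.hasDerivAt_sn t).continuousAt

theorem continuous_cn (h : IsJacobiTriple k sn cn dn) : Continuous cn :=
  continuous_iff_continuousAt.2 fun t => (h.hasDerivAt_cn t).continuousAt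

theorem continuous_dn (h : IsJacobiTriple k sn cn dn) : Continuous dn :=
  continuous_iff_continuousAt.2 fun t => (h.hasDerivAt_dn t).continuousAt

theorem sn_sq_add_cn_sq (h : IsJacobiTriple k sn cn dn) (t : ℝ) : sn t ^ 2 + cn t ^ 2 = 1 := by
  have hd : ∀ t, HasDerivAt (fun t => sn t ^ 2 + cn t ^ 2) 0 t := fun t =>
    (((h.hasDerivAt_sn t).fun_pow 2).fun_add ((h.hasDerivAt_cn t).fun_pow 2)).congr_deriv
      (by ring)
  simpa [h.sn_zero, h.cn_zero] using
    is_const_of_deriv_eq_zero (fun t => (hd t).differentiableAt) (fun t => (hd t).deriv) t 0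

theorem dn_sq_add_sq_mul_sn_sq (h : IsJacobiTriple k sn cn dn) (t : ℝ) :
    dn t ^ 2 + k ^ 2 * sn t ^ 2 = 1 := by
  have hd : ∀ t, HasDerivAt (fun t => dn t ^ 2 + k ^ 2 * sn t ^ 2) 0 t := fun t =>
    (((h.hasDerivAt_dn t).fun_pow 2).fun_add
      (((h.hasDerivAt_sn t).fun_pow 2).const_mul (k ^ 2))).congr_deriv (by ring)
  simpa [h.sn_zero, h.dn_zero] using
    is_const_of_deriv_eq_zero (fun t => (hd t).differentiableAt) (fun t => (hd t).deriv) t 0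

theorem abs_sn_le_one (h : IsJacobiTriple k sn cn dn) (t : ℝ) : |sn t| ≤ 1 := by
  rw [← sq_le_one_iff_abs_le_one]; nlinarith [h.sn_sq_add_cn_sq t]

theorem abs_cn_le_one (h : IsJacobiTriple k sn cn dn) (t : ℝ) : |cn t| ≤ 1 := by
  rw [← sq_le_one_iff_abs_le_one]; nlinarith [h.sn_sq_add_cn_sq t]

theorem dn_sq_le_one (h : IsJacobiTriple k sn cn dn) (t : ℝ) : dn t ^ 2 ≤ 1 := by
  nlinarith [h.dn_sq_add_sq_mul_sn_sq t]

theorem abs_dn_le_one (h : IsJacobiTriple k sn cn dn) (t : ℝ) : |dn t| ≤ 1 :=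
  (sq_le_one_iff_abs_le_one _).1 (h.dn_sq_le_one t)

theorem one_sub_sq_le_dn_sq (h : IsJacobiTriple k sn cn dn) (t : ℝ) : 1 - k ^ 2 ≤ dn t ^ 2 := by
  nlinarith [h.dn_sq_add_sq_mul_sn_sq t, h.sn_sq_add_cn_sq t, sq_nonneg (cn t), sq_nonneg k]

theorem dn_pos (h : IsJacobiTriple k sn cn dn) (hk : k ^ 2 < 1) (t : ℝ) : 0 < dn t := by
  by_contra! hdn
  obtain ⟨c, -, hc⟩ := intermediate_value_uIcc h.continuous_dn.continuousOn
    (mem_uIcc.2 (Or.inr ⟨hdn, h.dn_zero ▸ zero_le_one⟩))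
  nlinarith [h.one_sub_sq_le_dn_sq c]

theorem hasDerivAt_jacobiField (h : IsJacobiTriple k sn cn dn) (t : ℝ) :
    HasDerivAt (fun t => (sn t, cn t, dn t)) (jacobiField k (sn t, cn t, dn t)) t :=
  (h.hasDerivAt_sn t).prodMk ((h.hasDerivAt_cn t).prodMk (h.hasDerivAt_dn t))

theorem hasDerivAt_jacobiField_reflect (h : IsJacobiTriple k sn cn dn) (a t : ℝ) :
    HasDerivAt (fun t => (sn (a - t), -cn (a - t), dn (a - t)))
      (jacobiField k (sn (a - t), -cn (a - t), dn (a - t))) t := by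
  have hr := (hasDerivAt_id t).const_sub a
  refine ((h.hasDerivAt_sn (a - t)).comp t hr).prodMk
    ((((h.hasDerivAt_cn (a - t)).comp t hr).neg).prodMk
      ((h.hasDerivAt_dn (a - t)).comp t hr)) |>.congr_deriv ?_
  simp only [jacobiField, Prod.mk.injEq]
  refine ⟨?_, ?_, ?_⟩ <;> ring

theorem mem_closedBall (h : IsJacobiTriple k sn cn dn) (t : ℝ) :
    (sn t, cn t, dn t) ∈ Metric.closedBall (0 : ℝ × ℝ × ℝ) 1 := by
  rw [mem_closedBall_zero_iff, Prod.norm_def, Prod.norm_def]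
  exact max_le (h.abs_sn_le_one t) (max_le (h.abs_cn_le_one t) (h.abs_dn_le_one t))

theorem reflect (h : IsJacobiTriple k sn cn dn) (hk : k ^ 2 ≤ 1) (hK : cn K = 0)
    (t : ℝ) : sn (2 * K - t) = sn t ∧ cn (2 * K - t) = -cn t ∧ dn (2 * K - t) = dn t := by
  have heq := ODE_solution_unique_univ (v := fun _ => jacobiField k)
    (s := fun _ => Metric.closedBall 0 1) (t₀ := K) (fun _ => jacobiField_lipschitzOnWith hk)
    (fun t => ⟨h.hasDerivAt_jacobiField_reflect (2 * K) t, ?_⟩)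
    (fun t => ⟨h.hasDerivAt_jacobiField t, h.mem_closedBall t⟩) ?_
  · have := congrFun heq t
    simp only [Prod.mk.injEq] at this
    exact ⟨this.1, neg_eq_iff_eq_neg.1 this.2.1, this.2.2⟩
  · simpa [Prod.norm_def] using h.mem_closedBall (2 * K - t)
  · simp [show 2 * K - K = K by ring, hK]

theorem cn_pos (h : IsJacobiTriple k sn cn dn)
    (hK : IsLeast {p : ℝ | 0 < p ∧ cn p = 0} K) {p : ℝ} (hp : p ∈ Ico 0 K) : 0 < cn p :=
  pos_of_mem_Ico_of_isLeast_zero h.continuous_cn (h.cn_zero ▸ one_pos) hK hp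

theorem strictMonoOn_sn (h : IsJacobiTriple k sn cn dn) (hk : k ^ 2 < 1)
    (hK : IsLeast {p : ℝ | 0 < p ∧ cn p = 0} K) : StrictMonoOn sn (Icc 0 K) := by
  refine strictMonoOn_of_deriv_pos (convex_Icc 0 K) h.continuous_sn.continuousOn fun x hx => ?_
  rw [interior_Icc] at hx
  rw [(h.hasDerivAt_sn x).deriv]
  exact mul_pos (h.cn_pos hK (Ioo_subset_Ico_self hx)) (h.dn_pos hk x)

theorem sn_pos (h : IsJacobiTriple k sn cn dn) (hk : k ^ 2 < 1)
    (hK : IsLeast {p : ℝ | 0 < p ∧ cn p = 0} K) {p : ℝ} (hp : p ∈ Ioc 0 K) : 0 < sn p :=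
  h.sn_zero ▸ h.strictMonoOn_sn hk hK (left_mem_Icc.2 (hp.1.trans_le hp.2).le)
    (Ioc_subset_Icc_self hp) hp.1

theorem sn_eq_one_of_isLeast (h : IsJacobiTriple k sn cn dn) (hk : k ^ 2 < 1)
    (hK : IsLeast {p : ℝ | 0 < p ∧ cn p = 0} K) : sn K = 1 := by
  have hpos := h.sn_pos hk hK ⟨hK.1.1, le_rfl⟩
  nlinarith [h.sn_sq_add_cn_sq K, hK.1.2]

theorem integral_dn_sq_le (h : IsJacobiTriple k sn cn dn) {p : ℝ} (hp : 0 ≤ p) :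
    ∫ t in (0 : ℝ)..p, dn t ^ 2 ≤ p := by
  have := norm_integral_le_of_norm_le_const (a := 0) (b := p) (C := 1) (f := fun t => dn t ^ 2)
    fun t _ => by simpa using h.dn_sq_le_one t
  rw [one_mul, sub_zero, abs_of_nonneg hp] at this
  exact (le_abs_self _).trans this

theorem f1_neg (h : IsJacobiTriple k sn cn dn) (hk : k ^ 2 < 1)
    (hK : IsLeast {p : ℝ | 0 < p ∧ cn p = 0} K) {p : ℝ} (hp : p ∈ Ioc 0 K) :
    cn p * ((∫ t in (0 : ℝ)..p, dn t ^ 2) - p) - dn p * sn p < 0 := by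
  have hcn : 0 ≤ cn p := by
    rcases hp.2.lt_or_eq with hlt | rfl
    · exact (h.cn_pos hK ⟨hp.1.le, hlt⟩).le
    · exact hK.1.2.ge
  have hE := mul_nonpos_of_nonneg_of_nonpos hcn (sub_nonpos.2 (h.integral_dn_sq_le hp.1.le))
  have hdnsn := mul_pos (h.dn_pos hk p) (h.sn_pos hk hK hp)
  linarith

end IsJacobiTriple

theorem f1_sign_and_root (k : ℝ) (hk : k ∈ Set.Ioo (0 : ℝ) 1) (sn cn dn : ℝ → ℝ)
    (hsn : ∀ t, HasDerivAt sn (cn t * dn t) t)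
    (hcn : ∀ t, HasDerivAt cn (-(sn t * dn t)) t)
    (hdn : ∀ t, HasDerivAt dn (-(k ^ 2 * sn t * cn t)) t)
    (hsn0 : sn 0 = 0) (hcn0 : cn 0 = 1) (hdn0 : dn 0 = 1)
    (K : ℝ) (hK : IsLeast {p : ℝ | 0 < p ∧ cn p = 0} K) :
    (∀ p ∈ Ioc (0 : ℝ) K,
      cn p * ((∫ t in (0:ℝ)..p, (dn t) ^ 2) - p) - dn p * sn p < 0) ∧
    (∃ p ∈ Ioo K (2 * K),
      cn p * ((∫ t in (0:ℝ)..p, (dn t) ^ 2) - p) - dn p * sn p = 0) := by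
  have h : IsJacobiTriple k sn cn dn := ⟨hsn, hcn, hdn, hsn0, hcn0, hdn0⟩
  have hk2 : k ^ 2 < 1 := by nlinarith [hk.1, hk.2]
  have hKpos : 0 < K := hK.1.1
  refine ⟨fun p hp => h.f1_neg hk2 hK hp, ?_⟩
  obtain ⟨hsn2K, hcn2K, hdn2K⟩ := h.reflect hk2.le hK.1.2 0
  rw [sub_zero] at hsn2K hcn2K hdn2K
  have hdnK : dn K ^ 2 < 1 := by
    have := h.dn_sq_add_sq_mul_sn_sq K
    rw [h.sn_eq_one_of_isLeast hk2 hK, one_pow, mul_one] at this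
    linarith [pow_pos hk.1 2]
  have hE : ∫ t in (0 : ℝ)..2 * K, dn t ^ 2 < 2 * K := by
    simpa using integral_lt_sub_of_le_one (by linarith) (h.continuous_dn.pow 2).continuousOn
      (fun t _ => h.dn_sq_le_one t) ⟨hKpos.le, by linarith⟩ hdnK
  have hf1 : Continuous fun p => cn p * ((∫ t in (0 : ℝ)..p, dn t ^ 2) - p) - dn p * sn p :=
    (h.continuous_cn.mul ((continuous_primitive
      (fun a b => (h.continuous_dn.pow 2).intervalIntegrable a b) 0).sub continuous_id)).sub
      (h.continuous_dn.mul h.continuous_sn)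
  refine intermediate_value_Ioo (by linarith) hf1.continuousOn
    ⟨h.f1_neg hk2 hK ⟨hKpos, le_rfl⟩, ?_⟩
  simp only [hsn2K, hcn2K, hdn2K, h.sn_zero, h.cn_zero, h.dn_zero]
  linarith
end

section
/- Let γ, θ, x, y : ℝ → ℝ solve θ' = −cos(γ/2), x' = sin(γ/2) cos θ, y' = sin(γ/2) sin θ, where γ is continuously differentiable. At every time t where sin(γ(t)/2) ≠ 0, the signed curvature of the plane curve s ↦ (x(s), y(s)), namely κ = (x'y'' − y'x'')/((x')² + (y')²)^{3/2}, equals −cot(γ(t)/2) · sign(sin(γ(t)/2)). -/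
/-!
Along the geodesic the planar velocity is `v (cos θ, sin θ)` with speed factor `v = sin (γ / 2)`.
For any velocity in this polar form the cross product of velocity and acceleration is `v² θ'`,
independently of `v'`, while the squared speed is `v²`; hence the curvature is `θ' / |v|`, and
`θ' = -cos (γ / 2)` gives the claim.
-/

open Real

theorem polar_cross_hasDerivAt {v θ : ℝ → ℝ} {v' θ' a b t : ℝ}
    (hv : HasDerivAt v v' t) (hθ : HasDerivAt θ θ' t)
    (ha : HasDerivAt (fun s => v s * cos (θ s)) a t)
    (hb : HasDerivAt (fun s => v s * sin (θ s)) b t) :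
    v t * cos (θ t) * b - v t * sin (θ t) * a = v t ^ 2 * θ' := by
  rw [ha.unique (hv.mul hθ.cos), hb.unique (hv.mul hθ.sin)]
  linear_combination v t ^ 2 * θ' * sin_sq_add_cos_sq (θ t)

theorem mul_cos_sq_add_mul_sin_sq (v θ : ℝ) : (v * cos θ) ^ 2 + (v * sin θ) ^ 2 = v ^ 2 := by
  linear_combination v ^ 2 * cos_sq_add_sin_sq θ

theorem sq_rpow_three_halves (v : ℝ) : (v ^ 2) ^ ((3 : ℝ) / 2) = |v| ^ 3 := by
  rw [← sq_abs, ← rpow_natCast, ← rpow_mul (abs_nonneg v)]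
  norm_num

theorem sq_mul_div_abs_pow_three {v : ℝ} (hv : v ≠ 0) (w : ℝ) :
    v ^ 2 * w / |v| ^ 3 = w / v * sign v := by
  rcases hv.lt_or_gt with hneg | hpos
  · rw [abs_of_neg hneg, sign_of_neg hneg]
    field_simp
  · rw [abs_of_pos hpos, sign_of_pos hpos]
    field_simp

theorem geodesic_curvature_general (γ γ' θ x2 y2 : ℝ → ℝ)
    (hγ : ∀ t, HasDerivAt γ (γ' t) t)
    (hθ : ∀ t, HasDerivAt θ (-Real.cos (γ t / 2)) t)
    (hx2 : ∀ t, HasDerivAt (fun s => Real.sin (γ s / 2) * Real.cos (θ s)) (x2 t) t)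
    (hy2 : ∀ t, HasDerivAt (fun s => Real.sin (γ s / 2) * Real.sin (θ s)) (y2 t) t) :
    ∀ t : ℝ, Real.sin (γ t / 2) ≠ 0 →
      (Real.sin (γ t / 2) * Real.cos (θ t) * y2 t
          - Real.sin (γ t / 2) * Real.sin (θ t) * x2 t) /
        ((Real.sin (γ t / 2) * Real.cos (θ t)) ^ 2
          + (Real.sin (γ t / 2) * Real.sin (θ t)) ^ 2) ^ ((3 : ℝ) / 2)
      = -(Real.cos (γ t / 2) / Real.sin (γ t / 2)) * Real.sign (Real.sin (γ t / 2)) := by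
  intro t hs
  have hv : HasDerivAt (fun s => sin (γ s / 2)) (cos (γ t / 2) * (γ' t / 2)) t :=
    ((hγ t).div_const 2).sin
  rw [polar_cross_hasDerivAt hv (hθ t) (hx2 t) (hy2 t), mul_cos_sq_add_mul_sin_sq,
    sq_rpow_three_halves, sq_mul_div_abs_pow_three hs, neg_div]

theorem geodesic_curvature (γ γ' θ x y x2 y2 : ℝ → ℝ)
    (hγ : ∀ t, HasDerivAt γ (γ' t) t) (hγ'cont : Continuous γ')
    (hθ : ∀ t, HasDerivAt θ (-Real.cos (γ t / 2)) t)
    (hx : ∀ t, HasDerivAt x (Real.sin (γ t / 2) * Real.cos (θ t)) t)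
    (hy : ∀ t, HasDerivAt y (Real.sin (γ t / 2) * Real.sin (θ t)) t)
    (hx2 : ∀ t, HasDerivAt (fun s => Real.sin (γ s / 2) * Real.cos (θ s)) (x2 t) t)
    (hy2 : ∀ t, HasDerivAt (fun s => Real.sin (γ s / 2) * Real.sin (θ s)) (y2 t) t) :
    ∀ t : ℝ, Real.sin (γ t / 2) ≠ 0 →
      (Real.sin (γ t / 2) * Real.cos (θ t) * y2 t
          - Real.sin (γ t / 2) * Real.sin (θ t) * x2 t) /
        ((Real.sin (γ t / 2) * Real.cos (θ t)) ^ 2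
          + (Real.sin (γ t / 2) * Real.sin (θ t)) ^ 2) ^ ((3 : ℝ) / 2)
      = -(Real.cos (γ t / 2) / Real.sin (γ t / 2)) * Real.sign (Real.sin (γ t / 2)) :=
  geodesic_curvature_general γ γ' θ x2 y2 hγ hθ hx2 hy2
end
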